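/- arXiv:2012.03818 — 8 statements merged into one kernel-verified Lean document; each statement's English description precedes it below -/
import Mathlib

section
/- Let p be a prime and n ≥ p an integer with p-adic expansion n = α_r p^r + ... + α_0 where r ≥ 1, α_r ≥ 1, 0 ≤ α_i ≤ p-1, and α_{r-1} < p-1. Then the p-adic valuation of the binomial coefficient C(n, p^{r-1}(p-1)) equals 1. -/
/-!
By Kummer's theorem, `(p - 1) v_p(C(n, k)) = s(k) + s(n - k) - s(n)` for the base-`p` digit
sum `s`. For `k = p^(r-1) (p - 1)` we have `s(k) = p - 1`, and subtracting `k` from `n` borrows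
one from the digit `α r` into the digit `α (r-1)`, which becomes `α (r-1) + 1 ≤ p - 1`; since no
further borrow occurs, `s(n - k) = s(n)` and the valuation is `1`.
-/

open Finset

namespace Nat

theorem sum_range_mul_pow_lt_pow {p t : ℕ} {α : ℕ → ℕ} (h : ∀ i < t, α i < p) :
    ∑ i ∈ range t, α i * p ^ i < p ^ t := by
  induction t with
  | zero => simp
  | succ t ih =>
    calc ∑ i ∈ range (t + 1), α i * p ^ i
        = ∑ i ∈ range t, α i * p ^ i + α t * p ^ t := sum_range_succ _ _
      _ < p ^ t + α t * p ^ t := by gcongr; exact ih fun i hi => h i (by omega)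
      _ = (α t + 1) * p ^ t := by ring
      _ ≤ p * p ^ t := by gcongr; exact h t (by omega)
      _ = p ^ (t + 1) := by ring

variable {p : ℕ}

theorem sum_digits_of_lt {x : ℕ} (hx : x < p) : (p.digits x).sum = x := by
  rcases Nat.eq_zero_or_pos x with rfl | hx0
  · simp
  · simp [digits_of_lt p x hx0.ne' hx]

theorem sum_digits_add_pow_mul (hp : 1 < p) {x t : ℕ} (hx : x < p ^ t) (y : ℕ) :
    (p.digits (x + p ^ t * y)).sum = (p.digits x).sum + (p.digits y).sum := by
  rcases Nat.eq_zero_or_pos y with rfl | hy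
  · simp
  have hlen : (p.digits x).length ≤ t := (digits_length_le_iff hp x).mpr hx
  obtain ⟨k, rfl⟩ := Nat.exists_eq_add_of_le hlen
  rw [← digits_append_zeroes_append_digits hp hy]
  simp

theorem sum_digits_pow_mul (hp : 1 < p) (t y : ℕ) :
    (p.digits (p ^ t * y)).sum = (p.digits y).sum := by
  rcases Nat.eq_zero_or_pos y with rfl | hy
  · simp
  · simp [digits_base_pow_mul hp hy]

theorem sum_digits_add_pow_mul_add_mul (hp : 1 < p) {x t u v : ℕ} (hx : x < p ^ t)
    (hu : u < p) (hv : v < p) :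
    (p.digits (x + p ^ t * (u + p * v))).sum = (p.digits x).sum + (u + v) := by
  have huv := sum_digits_add_pow_mul hp (x := u) (t := 1) (by rwa [pow_one]) v
  rw [pow_one] at huv
  rw [sum_digits_add_pow_mul hp hx, huv, sum_digits_of_lt hu, sum_digits_of_lt hv]

end Nat

open Nat

theorem stmt_0_general (p n r : ℕ) (α : ℕ → ℕ) (hp : p.Prime) (hr : 1 ≤ r)
    (hn : n = ∑ i ∈ Finset.range (r + 1), α i * p ^ i)
    (hdig : ∀ i, α i ≤ p - 1) (htop : 1 ≤ α r) (hsub : α (r - 1) < p - 1) :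
    padicValNat p (n.choose (p ^ (r - 1) * (p - 1))) = 1 := by
  have : Fact p.Prime := ⟨hp⟩
  have hp_one := hp.one_lt
  obtain ⟨t, rfl⟩ : ∃ t, r = t + 1 := ⟨r - 1, by omega⟩
  rw [Nat.add_sub_cancel] at hsub ⊢
  have hlo : ∑ i ∈ range t, α i * p ^ i < p ^ t :=
    sum_range_mul_pow_lt_pow fun i _ => by have := hdig i; omega
  have hn' : n = ∑ i ∈ range t, α i * p ^ i + p ^ t * (α t + p * α (t + 1)) := by
    rw [hn, sum_range_succ, sum_range_succ]; ring
  generalize ∑ i ∈ range t, α i * p ^ i = lo at hlo hn'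
  have htop' := hdig (t + 1)
  have hborrow : lo + p ^ t * ((α t + 1) + p * (α (t + 1) - 1)) + p ^ t * (p - 1) = n := by
    obtain ⟨A, hA⟩ : ∃ A, α (t + 1) = A + 1 := ⟨α (t + 1) - 1, by omega⟩
    obtain ⟨q, rfl⟩ : ∃ q, p = q + 1 := ⟨p - 1, by omega⟩
    rw [hn', hA, Nat.add_sub_cancel, Nat.add_sub_cancel]
    ring
  have hdigits_k : (p.digits (p ^ t * (p - 1))).sum = p - 1 := by
    rw [sum_digits_pow_mul hp_one, sum_digits_of_lt (by omega)]
  have kummer := sub_one_mul_padicValNat_choose_eq_sub_sum_digits' (p := p)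
    (n := lo + p ^ t * ((α t + 1) + p * (α (t + 1) - 1))) (k := p ^ t * (p - 1))
  have hdigits_m := sum_digits_add_pow_mul_add_mul hp_one hlo
    (u := α t + 1) (v := α (t + 1) - 1) (by omega) (by omega)
  have hdigits_n := sum_digits_add_pow_mul_add_mul hp_one hlo
    (u := α t) (v := α (t + 1)) (by omega) (by omega)
  rw [← hn'] at hdigits_n
  rw [hborrow, hdigits_k, hdigits_m, hdigits_n] at kummer
  exact Nat.eq_of_mul_eq_mul_left (by omega : 0 < p - 1) (by omega)

theorem stmt_0 (p n r : ℕ) (α : ℕ → ℕ) (hp : p.Prime) (hnp : p ≤ n) (hr : 1 ≤ r)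
    (hn : n = ∑ i ∈ Finset.range (r + 1), α i * p ^ i)
    (hdig : ∀ i, α i ≤ p - 1) (htop : 1 ≤ α r) (hsub : α (r - 1) < p - 1) :
    padicValNat p (n.choose (p ^ (r - 1) * (p - 1))) = 1 :=
  stmt_0_general p n r α hp hr hn hdig htop hsub
end

section
/- Let p be a prime and n ≥ 1 an integer with base-p digit sum s_p(n) ≥ p. Then there exists an integer k with 1 ≤ k ≤ n-1 such that (p-1) divides k and every base-p digit of k is at most the corresponding base-p digit of n (hence p does not divide C(n,k)). -/
lemma aux_sub_digits (p : ℕ) (hp : 2 ≤ p) : ∀ n r, r ≤ (Nat.digits p n).sum →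
    ∃ k, k ≤ n ∧ (Nat.digits p k).sum = r ∧
      (Nat.digits p (n - k)).sum = (Nat.digits p n).sum - r ∧
      (∀ i, (Nat.digits p k).getD i 0 ≤ (Nat.digits p n).getD i 0) := by
  intro n
  induction n using Nat.strong_induction_on with
  | _ n IH =>
    intro r hr
    rcases Nat.eq_zero_or_pos n with hn | hn
    · subst hn
      simp only [Nat.digits_zero, List.sum_nil, Nat.le_zero] at hr
      exact ⟨0, le_rfl, by simp [hr], by simp, fun i => by simp⟩
    have hp1 : 1 < p := hp
    have hdn : Nat.digits p n = n % p :: Nat.digits p (n / p) := Nat.digits_def' hp1 hn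
    set a := n % p with ha
    set m := n / p with hm
    have hsn : (Nat.digits p n).sum = a + (Nat.digits p m).sum := by rw [hdn]; simp
    have hap : a < p := Nat.mod_lt _ (by omega)
    have hnpm : a + p * m = n := by rw [ha, hm]; exact Nat.mod_add_div n p
    by_cases hra : r ≤ a
    · refine ⟨r, by omega, ?_, ?_, ?_⟩
      · rcases Nat.eq_zero_or_pos r with h0 | h0
        · simp [h0]
        · rw [Nat.digits_of_lt p r (by omega) (by omega)]; simp
      · have hnr : n - r = (a - r) + p * m := by omega
        by_cases hz : a - r = 0 ∧ m = 0
        · have hpm : p * m = 0 := by rw [hz.2, Nat.mul_zero]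
          have : n - r = 0 := by omega
          rw [this]
          simp only [Nat.digits_zero, List.sum_nil]
          have : (Nat.digits p m).sum = 0 := by rw [hz.2]; simp
          omega
        · rw [hnr, Nat.digits_add p hp1 _ _ (by omega) (by tauto)]
          simp only [List.sum_cons]
          omega
      · intro i
        rcases Nat.eq_zero_or_pos r with h0 | h0
        · simp [h0]
        · rw [Nat.digits_of_lt p r (by omega) (by omega), hdn]
          match i with
          | 0 => simpa using hra
          | (i+1) => simp
    · push_neg at hra
      have hmn : m < n := Nat.div_lt_self hn hp1
      have hr' : r - a ≤ (Nat.digits p m).sum := by omega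
      obtain ⟨k', hk'le, hk's, hk'sub, hk'd⟩ := IH m hmn (r - a) hr'
      refine ⟨a + p * k', ?_, ?_, ?_, ?_⟩
      · have : p * k' ≤ p * m := Nat.mul_le_mul_left p hk'le
        omega
      · have hdisj : a ≠ 0 ∨ k' ≠ 0 := by
          by_contra h
          push_neg at h
          rw [h.2] at hk's
          simp at hk's
          omega
        rw [Nat.digits_add p hp1 _ _ hap hdisj]
        simp only [List.sum_cons]
        omega
      · have hnk : n - (a + p * k') = p * (m - k') := by
          have h1 : p * k' ≤ p * m := Nat.mul_le_mul_left p hk'le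
          have h2 : p * (m - k') = p * m - p * k' := Nat.mul_sub p m k'
          omega
        rw [hnk]
        rcases Nat.eq_zero_or_pos (m - k') with h0 | h0
        · rw [h0]
          simp only [Nat.mul_zero, Nat.digits_zero, List.sum_nil]
          rw [h0] at hk'sub
          simp at hk'sub
          omega
        · have : p * (m - k') = 0 + p * (m - k') := by ring
          rw [this, Nat.digits_add p hp1 _ _ (by omega) (by omega)]
          simp only [List.sum_cons, Nat.zero_add]
          omega
      · intro i
        have hdisj : a ≠ 0 ∨ k' ≠ 0 := by
          by_contra h
          push_neg at h
          rw [h.2] at hk's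
          simp at hk's
          omega
        rw [Nat.digits_add p hp1 _ _ hap hdisj, hdn]
        match i with
        | 0 => simp
        | (i+1) => simpa using hk'd i

theorem stmt_2 (p n : ℕ) (hp : p.Prime) (hn : 1 ≤ n)
    (hs : p ≤ (Nat.digits p n).sum) :
    ∃ k : ℕ, 1 ≤ k ∧ k ≤ n - 1 ∧ (p - 1) ∣ k ∧
      (∀ i, (Nat.digits p k).getD i 0 ≤ (Nat.digits p n).getD i 0) ∧
      ¬ p ∣ n.choose k := by
  have hp2 : 2 ≤ p := hp.two_le
  obtain ⟨k, hkle, hks, hksub, hkd⟩ := aux_sub_digits p hp2 n (p - 1) (by omega)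
  haveI : Fact p.Prime := ⟨hp⟩
  refine ⟨k, ?_, ?_, ?_, hkd, ?_⟩
  · rcases Nat.eq_zero_or_pos k with h0 | h0
    · rw [h0] at hks; simp at hks; omega
    · omega
  · have hkn : k ≠ n := by
      rintro rfl
      omega
    omega
  · rcases Nat.eq_or_lt_of_le hp2 with h2 | h3
    · rw [← h2]; simp
    · have hmod : p % (p - 1) = 1 := by
        rw [Nat.mod_eq_sub_mod (by omega), show p - (p - 1) = 1 by omega]
        exact Nat.one_mod_eq_one.mpr (by omega)
      have := Nat.modEq_digits_sum (p - 1) p hmod k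
      rw [hks] at this
      have h0 : p - 1 ≡ 0 [MOD p - 1] := (Nat.modEq_zero_iff_dvd).mpr dvd_rfl
      exact (Nat.modEq_zero_iff_dvd).mp (this.trans h0)
  · intro hdvd
    have hv := sub_one_mul_padicValNat_choose_eq_sub_sum_digits (p := p) hkle
    rw [hks, hksub] at hv
    have hz : (p - 1) * padicValNat p (n.choose k) = 0 := by omega
    have hv0 : padicValNat p (n.choose k) = 0 := by
      rcases Nat.mul_eq_zero.mp hz with h | h
      · omega
      · exact h
    have hpos : 0 < n.choose k := Nat.choose_pos hkle
    have := padicValNat.eq_zero_iff (p := p) (n := n.choose k) |>.mp hv0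
    rcases this with h | h | h
    · omega
    · omega
    · exact h hdvd
end

section
/- Let p be a prime, l ≥ 1, m = p^l, and j_1, ..., j_m ≥ 1 integers. Then v_p(j_1! · j_2! ⋯ j_m!) ≥ v_p(⌊(j_1 + ... + j_m)/p^l⌋). -/
/-!
Write `S = ∑ jᵢ`, `N` for the number of terms and `k = v_p(⌊S/N⌋)`. If `k ≥ 1` then `S ≥ N p^k`.
Since `v_p(n!) ≥ ⌊n/p⌋` and `p ⌊n/p⌋ ≥ n + 1 - p`, the valuation of `∏ jᵢ!` is at least
`(S - N(p - 1))/p ≥ N(p^k - p + 1)/p`, and this is `≥ k` as soon as `N ≥ p`, by Bernoulli's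
inequality `p^k ≥ k + p - 1`.
-/

open Nat Finset

lemma Nat.add_le_pow_add_one {p k : ℕ} (hp : 2 ≤ p) (hk : 1 ≤ k) : k + p ≤ p ^ k + 1 := by
  have bernoulli : 1 + (k : ℤ) * (p - 1) ≤ (p : ℤ) ^ k :=
    one_add_mul_sub_le_pow (by omega) k
  have : (k : ℤ) + p ≤ p ^ k + 1 := by nlinarith
  exact_mod_cast this

lemma Nat.Prime.pow_div_dvd_factorial {p : ℕ} (hp : p.Prime) (n : ℕ) : p ^ (n / p) ∣ n ! := by
  have : Fact p.Prime := ⟨hp⟩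
  rw [padicValNat_dvd_iff_le (factorial_ne_zero n), ← padicValNat_mul_div_factorial,
    padicValNat_factorial_mul]
  exact Nat.le_add_left _ _

lemma Nat.Prime.sum_div_le_padicValNat_prod_factorial {ι : Type*} {p : ℕ} (hp : p.Prime)
    (s : Finset ι) (j : ι → ℕ) :
    ∑ i ∈ s, j i / p ≤ padicValNat p (∏ i ∈ s, (j i)!) := by
  have : Fact p.Prime := ⟨hp⟩
  rw [← padicValNat_dvd_iff_le (prod_ne_zero_iff.mpr fun i _ => factorial_ne_zero _),
    ← prod_pow_eq_pow_sum]
  exact prod_dvd_prod_of_dvd _ _ fun i _ => hp.pow_div_dvd_factorial (j i)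

lemma Nat.sum_add_card_le_mul_sum_div {ι : Type*} {p : ℕ} (hp : 0 < p) (s : Finset ι)
    (j : ι → ℕ) : ∑ i ∈ s, j i + #s ≤ p * ∑ i ∈ s, j i / p + p * #s := by
  rw [mul_sum, card_eq_sum_ones, mul_sum, ← sum_add_distrib, ← sum_add_distrib, mul_one]
  exact sum_le_sum fun i _ => by
    have := lt_mul_div_succ (j i) hp
    rw [mul_add_one] at this
    omega

theorem Nat.Prime.padicValNat_sum_div_card_le_padicValNat_prod_factorial {ι : Type*}
    [Fintype ι] {p : ℕ} (hp : p.Prime) (hcard : p ≤ Fintype.card ι) (j : ι → ℕ) :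
    padicValNat p ((∑ i, j i) / Fintype.card ι) ≤ padicValNat p (∏ i, (j i)!) := by
  set N := Fintype.card ι
  set k := padicValNat p ((∑ i, j i) / N)
  refine le_trans ?_ (hp.sum_div_le_padicValNat_prod_factorial univ j)
  rcases Nat.eq_zero_or_pos k with hk | hk
  · omega
  have hq : (∑ i, j i) / N ≠ 0 := fun h => by simp [k, h] at hk
  have hS : N * p ^ k ≤ ∑ i, j i := by
    rw [mul_comm, ← Nat.le_div_iff_mul_le (hp.pos.trans_le hcard)]
    exact Nat.le_of_dvd (Nat.pos_of_ne_zero hq) pow_padicValNat_dvd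
  have hT := Nat.sum_add_card_le_mul_sum_div hp.pos univ j
  rw [Finset.card_univ] at hT
  have hpow := Nat.add_le_pow_add_one hp.two_le hk
  have hNk : N * k ≤ p * ∑ i, j i / p := by nlinarith
  exact Nat.le_of_mul_le_mul_left (by nlinarith) hp.pos

theorem stmt_3_general (p l : ℕ) (hp : p.Prime) (hl : 1 ≤ l)
    (j : Fin (p ^ l) → ℕ) :
    padicValNat p ((∑ i, j i) / p ^ l) ≤ padicValNat p (∏ i, Nat.factorial (j i)) := by
  have hcard : p ≤ Fintype.card (Fin (p ^ l)) := by
    simpa using Nat.le_self_pow (by omega) p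
  simpa using hp.padicValNat_sum_div_card_le_padicValNat_prod_factorial hcard j

theorem stmt_3 (p l : ℕ) (hp : p.Prime) (hl : 1 ≤ l)
    (j : Fin (p ^ l) → ℕ) (hj : ∀ i, 1 ≤ j i) :
    padicValNat p ((∑ i, j i) / p ^ l) ≤ padicValNat p (∏ i, Nat.factorial (j i)) :=
  stmt_3_general p l hp hl j
end

section
/- Let p be a prime, l ≥ 1, m = p^l + 1, and j_1, ..., j_m ≥ 1 integers. Then v_p(j_1! · j_2! ⋯ j_m!) ≥ v_p(⌊(j_1 + ... + j_m)/p^l⌋). -/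
/-!
Since `v_p(n!) ≥ ⌊n/p⌋`, every `n` satisfies `n < p (v_p(n!) + 1)`. Summing over the
`m = p^l + 1` indices gives `S + m ≤ p (V + m)` for `S = ∑ jᵢ` and `V = v_p(∏ jᵢ!)`.
If `v_p(⌊S / p^l⌋) > V`, then `S ≥ p^l p^(V+1)`, and as `p^V > V` this exceeds the
previous bound.
-/

open Nat Finset

lemma padicValNat_finset_prod {ι : Type*} {p : ℕ} [Fact p.Prime] (s : Finset ι) {f : ι → ℕ}
    (hf : ∀ i ∈ s, f i ≠ 0) : padicValNat p (∏ i ∈ s, f i) = ∑ i ∈ s, padicValNat p (f i) := by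
  classical
  induction s using Finset.induction_on with
  | empty => simp
  | insert a s ha ih =>
    have hs : ∀ i ∈ s, f i ≠ 0 := fun i hi ↦ hf i (mem_insert_of_mem hi)
    rw [prod_insert ha, sum_insert ha,
      padicValNat.mul (hf a (mem_insert_self a s)) (prod_ne_zero_iff.2 hs), ih hs]

lemma div_le_padicValNat_factorial (p n : ℕ) [Fact p.Prime] : n / p ≤ padicValNat p n ! := by
  rw [← padicValNat_mul_div_factorial, padicValNat_factorial_mul]
  exact Nat.le_add_left _ _

lemma lt_mul_padicValNat_factorial_add_one (p n : ℕ) [hp : Fact p.Prime] :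
    n < p * (padicValNat p n ! + 1) :=
  (Nat.lt_mul_div_succ n hp.out.pos).trans_le
    (Nat.mul_le_mul_left p (Nat.succ_le_succ (div_le_padicValNat_factorial p n)))

lemma sum_add_card_le_mul_padicValNat_prod_factorial {ι : Type*} [Fintype ι] (p : ℕ)
    [Fact p.Prime] (j : ι → ℕ) :
    ∑ i, j i + Fintype.card ι ≤ p * (padicValNat p (∏ i, (j i)!) + Fintype.card ι) := by
  rw [padicValNat_finset_prod _ fun i _ ↦ factorial_ne_zero (j i)]
  calc ∑ i, j i + Fintype.card ι = ∑ i, (j i + 1) := by simp [sum_add_distrib]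
    _ ≤ ∑ i, p * (padicValNat p (j i)! + 1) :=
      sum_le_sum fun i _ ↦ lt_mul_padicValNat_factorial_add_one p (j i)
    _ = p * (∑ i, padicValNat p (j i)! + Fintype.card ι) := by simp [← mul_sum, sum_add_distrib]

lemma pow_le_of_le_padicValNat {p n k : ℕ} [hp : Fact p.Prime] (hn : n ≠ 0)
    (hk : k ≤ padicValNat p n) : p ^ k ≤ n :=
  (Nat.pow_le_pow_right hp.out.pos hk).trans
    (Nat.le_of_dvd (Nat.pos_of_ne_zero hn) pow_padicValNat_dvd)

lemma mul_add_lt_mul_pow_succ_add {p a : ℕ} (hp : 2 ≤ p) (hpa : p ≤ a) (V : ℕ) :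
    p * (V + (a + 1)) < a * p ^ (V + 1) + (a + 1) := by
  have hV : V + 1 ≤ p ^ V := Nat.lt_pow_self (by omega)
  have h : a * (V + 1) * p ≤ a * p ^ (V + 1) := by
    rw [pow_succ, ← mul_assoc]
    gcongr
  have : 1 * V * p ≤ a * V * p := by gcongr; omega
  nlinarith

theorem stmt_4_general (p l : ℕ) (hp : p.Prime) (hl : 1 ≤ l)
    (j : Fin (p ^ l + 1) → ℕ) :
    padicValNat p ((∑ i, j i) / p ^ l) ≤ padicValNat p (∏ i, Nat.factorial (j i)) := by
  have := Fact.mk hp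
  by_contra! hV
  have hq : (∑ i, j i) / p ^ l ≠ 0 := fun h ↦ by simp [h] at hV
  have hS : p ^ l * p ^ (padicValNat p (∏ i, (j i)!) + 1) ≤ ∑ i, j i :=
    (Nat.mul_le_mul_left _ (pow_le_of_le_padicValNat hq hV)).trans (Nat.mul_div_le _ _)
  have hsum := sum_add_card_le_mul_padicValNat_prod_factorial p j
  rw [Fintype.card_fin] at hsum
  have hlt := mul_add_lt_mul_pow_succ_add hp.two_le (Nat.le_self_pow (by omega) p)
    (padicValNat p (∏ i, (j i)!)) (a := p ^ l)
  omega

theorem stmt_4 (p l : ℕ) (hp : p.Prime) (hl : 1 ≤ l)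
    (j : Fin (p ^ l + 1) → ℕ) (hj : ∀ i, 1 ≤ j i) :
    padicValNat p ((∑ i, j i) / p ^ l) ≤ padicValNat p (∏ i, Nat.factorial (j i)) :=
  stmt_4_general p l hp hl j
end

section
/- For every prime p and integer n ≥ 1, the Stirling number of the second kind satisfies: S(p^e, j) ≡ 0 (mod p) if j ∈ {1, ..., p^e} is not a power of p with exponent at most e, and S(p^e, j) ≡ 1 (mod p) if j = p^f for some 0 ≤ f ≤ e. -/
open Polynomial Finset

/-- Stirling numbers of the second kind. -/
def stirling2 : ℕ → ℕ → ℕ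
  | 0, 0 => 1
  | 0, _ + 1 => 0
  | _ + 1, 0 => 0
  | q + 1, j + 1 => (j + 1) * stirling2 q (j + 1) + stirling2 q j

lemma stirling2_eq_zero : ∀ {q j : ℕ}, q < j → stirling2 q j = 0 := by
  intro q
  induction q with
  | zero => intro j h; cases j with
    | zero => omega
    | succ j => rfl
  | succ q ih =>
    intro j h
    cases j with
    | zero => omega
    | succ j =>
      show (j + 1) * stirling2 q (j + 1) + stirling2 q j = 0
      rw [ih (by omega), ih (by omega)]
      ring

/-- Falling factorial polynomial X(X-1)...(X-j+1). -/
noncomputable def ff (R : Type*) [CommRing R] (j : ℕ) : R[X] :=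
  ∏ i ∈ range j, (X - C (i : R))

variable {R : Type*} [CommRing R]

lemma ff_monic (j : ℕ) : (ff R j).Monic :=
  monic_prod_of_monic _ _ fun i _ => monic_X_sub_C _

lemma ff_natDegree [Nontrivial R] (j : ℕ) : (ff R j).natDegree = j := by
  rw [ff, natDegree_prod_of_monic _ _ fun i _ => monic_X_sub_C _]
  simp only [natDegree_X_sub_C]
  simp

lemma ff_succ (j : ℕ) : ff R (j + 1) = ff R j * (X - C (j : R)) := by
  rw [ff, prod_range_succ]; rfl

lemma X_mul_ff (j : ℕ) : X * ff R j = ff R (j + 1) + C (j : R) * ff R j := by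
  rw [ff_succ]; ring

/-- Key identity: sum of Stirling numbers times falling factorials. -/
lemma key (q : ℕ) :
    ∑ k ∈ range (q + 1), C ((stirling2 q k : R)) * ff R k = X ^ q := by
  induction q with
  | zero => simp [ff, stirling2]
  | succ q ih =>
    have h0 : stirling2 (q + 1) 0 = 0 := rfl
    rw [sum_range_succ']
    have hstep : ∀ k, (stirling2 (q+1) (k+1) : R)
        = (k+1 : R) * stirling2 q (k+1) + stirling2 q k := by
      intro k
      show ((((k:ℕ) + 1) * stirling2 q (k + 1) + stirling2 q k : ℕ) : R) = _
      push_cast; ring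
    calc ∑ k ∈ range (q + 1), C ((stirling2 (q+1) (k+1) : R)) * ff R (k+1)
          + C ((stirling2 (q+1) 0 : R)) * ff R 0
        = ∑ k ∈ range (q + 1),
            ((C ((k+1 : R)) * C ((stirling2 q (k+1) : R))
              + C ((stirling2 q k : R))) * ff R (k+1)) := by
          rw [h0]; push_cast
          simp only [map_zero, zero_mul, add_zero]
          refine Finset.sum_congr rfl fun k _ => ?_
          rw [hstep k]; simp [map_add, map_mul]
      _ = (∑ k ∈ range (q + 1), C (((k:R)+1)) * C ((stirling2 q (k+1) : R)) * ff R (k+1))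
          + ∑ k ∈ range (q + 1), C ((stirling2 q k : R)) * ff R (k+1) := by
          rw [← Finset.sum_add_distrib]
          refine Finset.sum_congr rfl fun k _ => ?_
          ring
      _ = (∑ k ∈ range (q + 1), C ((k:R)) * C ((stirling2 q k : R)) * ff R k)
          + ∑ k ∈ range (q + 1), C ((stirling2 q k : R)) * ff R (k+1) := by
          congr 1
          -- shift of index; both equal sum over range (q+2) of g
          have : ∀ N, (N = q + 2) → (∑ k ∈ range N, C ((k:R)) * C ((stirling2 q k : R)) * ff R k)
              = ∑ k ∈ range (q+1), C ((k:R)) * C ((stirling2 q k : R)) * ff R k := by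
            rintro N rfl
            rw [sum_range_succ, stirling2_eq_zero (by omega)]
            simp
          rw [← this _ rfl]
          symm
          rw [sum_range_succ']
          simp only [Nat.cast_zero, map_zero, zero_mul, add_zero]
          refine Finset.sum_congr rfl fun k _ => ?_
          simp only [Nat.cast_succ, map_add, map_one]
      _ = ∑ k ∈ range (q + 1), C ((stirling2 q k : R)) * (X * ff R k) := by
          rw [← Finset.sum_add_distrib]
          refine Finset.sum_congr rfl fun k _ => ?_
          rw [X_mul_ff]
          ring
      _ = X * ∑ k ∈ range (q + 1), C ((stirling2 q k : R)) * ff R k := by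
          rw [Finset.mul_sum]
          exact Finset.sum_congr rfl fun k _ => by ring
      _ = X ^ (q + 1) := by rw [ih, pow_succ]; ring

/-- Linear independence of the falling factorials. -/
lemma li [Nontrivial R] :
    ∀ (n : ℕ) (a : ℕ → R), (∑ k ∈ range n, C (a k) * ff R k) = 0 → ∀ k < n, a k = 0 := by
  intro n
  induction n with
  | zero => intro a h k hk; omega
  | succ n ih =>
    intro a h k hk
    have htop : a n = 0 := by
      have hc := congrArg (fun P => Polynomial.coeff P n) h
      simp only [finset_sum_coeff, coeff_zero] at hc
      rw [sum_range_succ] at hc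
      have h1 : ∀ m ∈ range n, (C (a m) * ff R m).coeff n = 0 := by
        intro m hm
        rw [coeff_C_mul]
        rw [Polynomial.coeff_eq_zero_of_natDegree_lt (by rw [ff_natDegree]; exact mem_range.mp hm)]
        ring
      rw [Finset.sum_eq_zero h1, zero_add, coeff_C_mul] at hc
      have : (ff R n).coeff n = 1 := by
        have := (ff_monic (R := R) n).coeff_natDegree
        rwa [ff_natDegree] at this
      rwa [this, mul_one] at hc
    rcases Nat.lt_succ_iff_lt_or_eq.mp hk with h' | rfl
    · refine ih a ?_ k h'
      rw [sum_range_succ, htop] at h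
      simpa using h
    · exact htop


section ZModP

variable (p : ℕ) [Fact p.Prime]

lemma ff_p : ff (ZMod p) p = X ^ p - X := by
  haveI : NeZero p := ⟨(Fact.out : p.Prime).pos.ne'⟩
  have hcard : Fintype.card (ZMod p) = p := ZMod.card p
  have hroots : (X ^ p - X : (ZMod p)[X]).roots = (Finset.univ : Finset (ZMod p)).val := by
    have := FiniteField.roots_X_pow_card_sub_X (ZMod p)
    rwa [hcard] at this
  have h1 : (1 : ℕ) < p := (Fact.out : p.Prime).one_lt
  have hmonic : (X ^ p - X : (ZMod p)[X]).Monic := by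
    apply Polynomial.monic_X_pow_sub
    rw [degree_X]
    exact_mod_cast h1
  have hdeg : (X ^ p - X : (ZMod p)[X]).natDegree = p :=
    FiniteField.X_pow_card_sub_X_natDegree_eq (ZMod p) h1
  have hcardroots : Multiset.card (X ^ p - X : (ZMod p)[X]).roots
      = (X ^ p - X : (ZMod p)[X]).natDegree := by
    rw [hroots, hdeg]
    simpa using hcard
  have h2 := Polynomial.prod_multiset_X_sub_C_of_monic_of_roots_card_eq hmonic hcardroots
  have hinj : ∀ x ∈ range p, ∀ y ∈ range p,
      ((x : ℕ) : ZMod p) = ((y : ℕ) : ZMod p) → x = y := by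
    intro x hx y hy hxy
    have := congrArg ZMod.val hxy
    rwa [ZMod.val_cast_of_lt (mem_range.mp hx), ZMod.val_cast_of_lt (mem_range.mp hy)] at this
  have himg : (range p).image (fun i : ℕ => (i : ZMod p)) = Finset.univ := by
    ext a
    simp only [mem_image, mem_range, mem_univ, iff_true]
    exact ⟨a.val, ZMod.val_lt a, by simp [ZMod.natCast_val, ZMod.cast_id]⟩
  calc ff (ZMod p) p = ∏ a ∈ (range p).image (fun i : ℕ => (i : ZMod p)), (X - C a) := by
        rw [Finset.prod_image hinj]; rfl
    _ = ∏ a : ZMod p, (X - C a) := by rw [himg]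
    _ = X ^ p - X := by rw [← h2, hroots]; rfl

lemma ff_p_mul (m : ℕ) : ff (ZMod p) (p * m) = ((X : (ZMod p)[X]) ^ p - X) ^ m := by
  induction m with
  | zero => simp [ff]
  | succ m ih =>
    have hpm : p * (m + 1) = p * m + p := by ring
    rw [hpm, ff, Finset.prod_range_add, ← ff, ih]
    have hcast : ∀ i : ℕ, ((p * m + i : ℕ) : ZMod p) = (i : ZMod p) := by
      intro i; push_cast [ZMod.natCast_self]; ring
    have : (∏ i ∈ range p, (X - C ((p * m + i : ℕ) : ZMod p)))
        = ff (ZMod p) p := by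
      rw [ff]; exact Finset.prod_congr rfl fun i _ => by rw [hcast]
    rw [this, ff_p, pow_succ]

lemma sum_ff_pow (e : ℕ) :
    ∑ f ∈ range (e + 1), ff (ZMod p) (p ^ f) = X ^ (p ^ e) := by
  induction e with
  | zero => simp [ff]
  | succ e ih =>
    rw [sum_range_succ, ih]
    have h1 : p ^ (e + 1) = p * p ^ e := by ring
    have h2 : ff (ZMod p) (p ^ (e + 1)) = X ^ (p ^ (e + 1)) - X ^ (p ^ e) := by
      rw [h1, ff_p_mul, sub_pow_char_pow, ← pow_mul, ← h1]
    rw [h2]; ring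

end ZModP

theorem stmt_7 (p : ℕ) (hp : p.Prime) (e j : ℕ) (hj1 : 1 ≤ j) (hj2 : j ≤ p ^ e) :
    ((¬ ∃ f ≤ e, j = p ^ f) → (stirling2 (p ^ e) j : ZMod p) = 0) ∧
      (∀ f ≤ e, j = p ^ f → (stirling2 (p ^ e) j : ZMod p) = 1) := by
  haveI : Fact p.Prime := ⟨hp⟩
  classical
  set a : ℕ → ZMod p := fun k => ((stirling2 (p ^ e) k : ℕ) : ZMod p) with ha
  set d : ℕ → ZMod p := fun k => if ∃ f ≤ e, k = p ^ f then 1 else 0 with hd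
  have hA : ∑ k ∈ range (p ^ e + 1), C (a k) * ff (ZMod p) k = X ^ (p ^ e) := key _
  have hs : (range (e + 1)).image (p ^ ·) ⊆ range (p ^ e + 1) := by
    intro x hx
    simp only [mem_image, mem_range] at hx ⊢
    obtain ⟨f, hf, rfl⟩ := hx
    have := Nat.pow_le_pow_right hp.pos (by omega : f ≤ e)
    omega
  have hD : ∑ k ∈ range (p ^ e + 1), C (d k) * ff (ZMod p) k = X ^ (p ^ e) := by
    calc ∑ k ∈ range (p ^ e + 1), C (d k) * ff (ZMod p) k
        = ∑ k ∈ range (p ^ e + 1),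
            (if k ∈ (range (e + 1)).image (p ^ ·) then ff (ZMod p) k else 0) := by
          refine Finset.sum_congr rfl fun k _ => ?_
          have hiff : (∃ f ≤ e, k = p ^ f) ↔ k ∈ (range (e + 1)).image (p ^ ·) := by
            simp only [mem_image, mem_range]
            constructor
            · rintro ⟨f, hf, rfl⟩; exact ⟨f, by omega, rfl⟩
            · rintro ⟨f, hf, rfl⟩; exact ⟨f, by omega, rfl⟩
          by_cases h : ∃ f ≤ e, k = p ^ f
          · rw [if_pos (hiff.mp h)]
            simp [hd, h]
          · rw [if_neg (fun hc => h (hiff.mpr hc))]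
            simp [hd, h]
      _ = ∑ k ∈ (range (e + 1)).image (p ^ ·), ff (ZMod p) k := by
          rw [Finset.sum_ite_mem, Finset.inter_eq_right.mpr hs]
      _ = ∑ f ∈ range (e + 1), ff (ZMod p) (p ^ f) := by
          rw [Finset.sum_image]
          intro x _ y _ h
          exact Nat.pow_right_injective hp.two_le h
      _ = X ^ (p ^ e) := sum_ff_pow p e
  have hzero : ∑ k ∈ range (p ^ e + 1), C (a k - d k) * ff (ZMod p) k = 0 := by
    simp only [map_sub, sub_mul]
    rw [Finset.sum_sub_distrib, hA, hD, sub_self]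
  have hall := li (R := ZMod p) _ _ hzero
  have hlt : j < p ^ e + 1 := by omega
  have hja : a j = d j := sub_eq_zero.mp (hall j hlt)
  constructor
  · intro hno
    show a j = 0
    rw [hja]
    simp only [hd]
    rw [if_neg hno]
  · intro f hf hjf
    show a j = 1
    rw [hja]
    simp only [hd]
    rw [if_pos ⟨f, hf, hjf⟩]
end

section
/- Let p be a prime, n ≥ 2, 1 ≤ k ≤ n-1, and let r ∈ {0, ..., p-2} with r ≡ n (mod p-1). Define a = ∑ C(k,j), the sum over all j with 1 ≤ j ≤ k and j ≡ r (mod p-1). If r = 0 and (p-1) ∤ k, then a ≡ 0 (mod p). -/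
/-!
In a finite field `K` with `q` elements, `∑ x, x ^ i` is `-1` when `i ≠ 0` and `q - 1 ∣ i`, and `0`
otherwise. Expanding `∑ x, (x + 1) ^ k` by the binomial theorem therefore gives
`-∑ C(k, j)` over `1 ≤ j ≤ k` with `q - 1 ∣ j`, while shifting the summation variable shows that it
equals `∑ x, x ^ k`, which vanishes when `q - 1 ∤ k`.
-/

open Finset

namespace FiniteField

variable {K : Type*} [Field K] [Fintype K] [DecidableEq K]

theorem sum_pow_eq_sum_units_pow {i : ℕ} (hi : i ≠ 0) :
    ∑ x : K, x ^ i = ∑ x : Kˣ, (x : K) ^ i := by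
  rw [Fintype.sum_eq_add_sum_compl 0, zero_pow hi, zero_add,
    Finset.sum_subtype _ (p := (· ≠ 0)) (by simp)]
  exact (Fintype.sum_equiv unitsEquivNeZero _ _ fun _ => rfl).symm

theorem sum_pow_eq_ite (i : ℕ) :
    ∑ x : K, x ^ i = if i ≠ 0 ∧ Fintype.card K - 1 ∣ i then -1 else 0 := by
  rcases eq_or_ne i 0 with rfl | hi
  · simp
  · rw [sum_pow_eq_sum_units_pow hi, sum_pow_units]
    simp [hi]

theorem sum_choose_filter_card_sub_one_dvd {k : ℕ} (hkq : ¬ Fintype.card K - 1 ∣ k) :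
    ∑ j ∈ (Icc 1 k).filter (Fintype.card K - 1 ∣ ·), (k.choose j : K) = 0 := by
  have hsupport : (range (k + 1)).filter (fun j => j ≠ 0 ∧ Fintype.card K - 1 ∣ j)
      = (Icc 1 k).filter (Fintype.card K - 1 ∣ ·) := by
    ext j; simp only [mem_filter, mem_range, mem_Icc]; omega
  rw [← neg_eq_zero, ← hsupport]
  calc -∑ j ∈ (range (k + 1)).filter (fun j => j ≠ 0 ∧ Fintype.card K - 1 ∣ j), (k.choose j : K)
      = ∑ j ∈ range (k + 1), (k.choose j : K) * ∑ x : K, x ^ j := by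
        simp only [sum_pow_eq_ite, mul_ite, mul_neg, mul_one, mul_zero, sum_ite, sum_const_zero,
          add_zero, sum_neg_distrib]
    _ = ∑ x : K, (x + 1) ^ k := by
        simp only [add_pow, one_pow, mul_one, mul_sum]
        rw [sum_comm]
        simp only [mul_comm]
    _ = ∑ x : K, x ^ k := Fintype.sum_equiv (Equiv.addRight 1) _ _ (fun _ => rfl)
    _ = 0 := by rw [sum_pow_eq_ite, if_neg fun h => hkq h.2]

end FiniteField

theorem stmt_10_general (p k r : ℕ) (hp : p.Prime)
    (hr0 : r = 0) (hndvd : ¬ (p - 1) ∣ k) :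
    ((∑ j ∈ (Finset.Icc 1 k).filter (fun j => j ≡ r [MOD p - 1]), k.choose j : ℕ) :
      ZMod p) = 0 := by
  have : Fact p.Prime := ⟨hp⟩
  have hsum := FiniteField.sum_choose_filter_card_sub_one_dvd (K := ZMod p) (k := k)
    (by rwa [ZMod.card])
  subst hr0
  simpa only [ZMod.card, Nat.modEq_zero_iff_dvd, Nat.cast_sum] using hsum

theorem stmt_10 (p n k r : ℕ) (hp : p.Prime) (hn : 2 ≤ n)
    (hk1 : 1 ≤ k) (hk2 : k ≤ n - 1)
    (hr : r ≤ p - 2) (hrn : r ≡ n [MOD p - 1])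
    (hr0 : r = 0) (hndvd : ¬ (p - 1) ∣ k) :
    ((∑ j ∈ (Finset.Icc 1 k).filter (fun j => j ≡ r [MOD p - 1]), k.choose j : ℕ) :
      ZMod p) = 0 :=
  stmt_10_general p k r hp hr0 hndvd
end

section
/- Let p be a prime, n ≥ 2, 1 ≤ k ≤ n-1 with (p-1) ∣ k, and let r ∈ {0,...,p-2} with r ≡ n (mod p-1). Then the sum a = ∑_{1 ≤ j ≤ k, j ≡ r (mod p-1)} C(k,j) satisfies a ≡ (-1)^n (mod p). -/
/-!
Put `s = p - 1 - r` and `T = ∑_{a ∈ 𝔽_p^×} a^s (a + 1)^k`. Expanding `(a + 1)^k` and using that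
`∑ a^i` over `𝔽_p^×` is `-1` when `p - 1 ∣ i` and `0` otherwise, `T` is minus the sum of the
`C(k, j)`, `0 ≤ j ≤ k`, with `p - 1 ∣ s + j`, i.e. `j ≡ r`. Since `p - 1 ∣ k`, Fermat makes
`(a + 1)^k` equal to `1` except at `a = -1`, where it vanishes, so `T = -[p - 1 ∣ s] - (-1)^s`.
The `j = 0` term is exactly `[p - 1 ∣ s]`, leaving `(-1)^s`, which is `(-1)^n` because
`p - 1 ∣ s + n`.
-/

open Finset

namespace FiniteField

variable {K : Type*} [Field K] [Fintype K] [DecidableEq K]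

local notation "q" => Fintype.card K

theorem sum_units_pow_mul_add_one_pow (s k : ℕ) :
    ∑ a : Kˣ, (a : K) ^ s * (a + 1) ^ k =
      -∑ j ∈ (range (k + 1)).filter (fun j => q - 1 ∣ s + j), (k.choose j : K) := by
  calc ∑ a : Kˣ, (a : K) ^ s * (a + 1) ^ k
      = ∑ j ∈ range (k + 1), (∑ a : Kˣ, (a : K) ^ (s + j)) * k.choose j := by
        simp_rw [add_pow, one_pow, mul_one, mul_sum, sum_mul]
        rw [sum_comm]
        refine sum_congr rfl fun j _ => sum_congr rfl fun a _ => by ring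
    _ = -∑ j ∈ (range (k + 1)).filter (fun j => q - 1 ∣ s + j), (k.choose j : K) := by
        rw [sum_filter, ← sum_neg_distrib]
        refine sum_congr rfl fun j _ => ?_
        rw [sum_pow_units]
        split_ifs <;> simp

theorem sum_units_pow_mul_add_one_pow_of_dvd (s : ℕ) {k : ℕ} (hk : k ≠ 0) (hdvd : q - 1 ∣ k) :
    ∑ a : Kˣ, (a : K) ^ s * (a + 1) ^ k = (if q - 1 ∣ s then -1 else 0) - (-1) ^ s := by
  have hfermat (a : Kˣ) : ((a : K) + 1) ^ k = 1 - if a = -1 then 1 else 0 := by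
    split_ifs with ha
    · simp [ha, zero_pow hk]
    · obtain ⟨t, rfl⟩ := hdvd
      have hne : (a : K) + 1 ≠ 0 := fun h => ha (Units.ext (eq_neg_of_add_eq_zero_left h))
      rw [pow_mul, pow_card_sub_one_eq_one _ hne, one_pow, sub_zero]
  simp_rw [hfermat, mul_sub, mul_one, sum_sub_distrib, mul_ite, mul_one, mul_zero,
    sum_ite_eq', mem_univ, if_true, sum_pow_units, Units.val_neg, Units.val_one]

theorem sum_Icc_filter_choose_eq_neg_one_pow (s : ℕ) {k : ℕ} (hk : k ≠ 0) (hdvd : q - 1 ∣ k) :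
    ∑ j ∈ (Icc 1 k).filter (fun j => q - 1 ∣ s + j), (k.choose j : K) = (-1) ^ s := by
  have hexpand := sum_units_pow_mul_add_one_pow (K := K) s k
  rw [sum_units_pow_mul_add_one_pow_of_dvd s hk hdvd, sum_filter, range_eq_Ico,
    sum_eq_sum_Ico_succ_bot k.add_one_pos, zero_add, Ico_add_one_right_eq_Icc,
    ← sum_filter] at hexpand
  simp only [add_zero, Nat.choose_zero_right, Nat.cast_one] at hexpand
  split_ifs at hexpand <;> linear_combination hexpand

end FiniteField

theorem Nat.dvd_sub_add_iff_modEq {m r j : ℕ} (h : r ≤ m) : m ∣ m - r + j ↔ j ≡ r [MOD m] := by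
  have hm : m - r + r ≡ 0 [MOD m] := by
    rw [Nat.sub_add_cancel h]
    exact Nat.modEq_zero_iff_dvd.2 dvd_rfl
  rw [← Nat.modEq_zero_iff_dvd]
  exact ⟨fun hj => (hj.trans hm.symm).add_left_cancel' _, fun hj => (hj.add_left _).trans hm⟩

theorem stmt_11_general (p n k r : ℕ) (hp : p.Prime)
    (hk1 : 1 ≤ k) (hdvd : (p - 1) ∣ k)
    (hr : r ≤ p - 2) (hrn : r ≡ n [MOD p - 1]) :
    ((∑ j ∈ (Finset.Icc 1 k).filter (fun j => j ≡ r [MOD p - 1]), k.choose j : ℕ) :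
      ZMod p) = (-1) ^ n := by
  have := Fact.mk hp
  have hrm : r ≤ p - 1 := by omega
  have hfilter : (Icc 1 k).filter (fun j => j ≡ r [MOD p - 1]) =
      (Icc 1 k).filter (fun j => p - 1 ∣ p - 1 - r + j) :=
    filter_congr fun j _ => (Nat.dvd_sub_add_iff_modEq hrm).symm
  have hsum := FiniteField.sum_Icc_filter_choose_eq_neg_one_pow (K := ZMod p) (p - 1 - r)
    (k := k) (by omega) (by rwa [ZMod.card])
  rw [ZMod.card] at hsum
  have hperiod : (-1 : ZMod p) ^ (p - 1 - r + n) = 1 := by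
    obtain ⟨t, ht⟩ := (Nat.dvd_sub_add_iff_modEq hrm).2 hrn.symm
    rw [ht, pow_mul, ZMod.pow_card_sub_one_eq_one (neg_ne_zero.2 one_ne_zero), one_pow]
  calc ((∑ j ∈ (Icc 1 k).filter (fun j => j ≡ r [MOD p - 1]), k.choose j : ℕ) : ZMod p)
      = (-1) ^ (p - 1 - r) := by rw [hfilter, Nat.cast_sum, hsum]
    _ = (-1) ^ (p - 1 - r + n) * (-1) ^ n := by rw [pow_add, mul_assoc, ← pow_add, ← two_mul,
        pow_mul, neg_one_sq, one_pow, mul_one]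
    _ = (-1) ^ n := by rw [hperiod, one_mul]

theorem stmt_11 (p n k r : ℕ) (hp : p.Prime) (hn : 2 ≤ n)
    (hk1 : 1 ≤ k) (hk2 : k ≤ n - 1) (hdvd : (p - 1) ∣ k)
    (hr : r ≤ p - 2) (hrn : r ≡ n [MOD p - 1]) :
    ((∑ j ∈ (Finset.Icc 1 k).filter (fun j => j ≡ r [MOD p - 1]), k.choose j : ℕ) :
      ZMod p) = (-1) ^ n :=
  stmt_11_general p n k r hp hk1 hdvd hr hrn
end

section
/- Let p be a prime and l ≥ 2. Then the smallest positive integer n with ⌊log_p(s_p(n))⌋ = l is n = 2 p^x − 1 where x = (p^l − 1)/(p − 1). -/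
lemma aux_mul_sub (p : ℕ) (hp : 2 ≤ p) (k : ℕ) :
    p * (2 * p ^ k - 1) = 2 * p ^ (k + 1) - p := by
  have hP : 1 ≤ p ^ k := Nat.one_le_pow _ _ (by omega)
  have h1 : p * (2 * p ^ k - 1) + p * 1 = p * (2 * p ^ k) := by
    rw [← Nat.mul_add]; congr 1; omega
  have h2 : p * (2 * p ^ k) = 2 * p ^ (k + 1) := by ring
  have hP2 : p ≤ p ^ (k + 1) := Nat.le_self_pow (by omega) p
  omega

lemma aux_sum_digits_eq (p : ℕ) (hp : 2 ≤ p) (k : ℕ) :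
    (Nat.digits p (2 * p ^ k - 1)).sum = k * (p - 1) + 1 := by
  induction k with
  | zero =>
    have : 2 * p ^ 0 - 1 = 1 := by norm_num
    rw [this, Nat.digits_def' (by omega : 1 < p) (by norm_num)]
    simp [Nat.mod_eq_of_lt (by omega : 1 < p), Nat.div_eq_of_lt (by omega : 1 < p)]
  | succ k ih =>
    have hP : 1 ≤ p ^ k := Nat.one_le_pow _ _ (by omega)
    have hP1 : 1 ≤ p ^ (k + 1) := Nat.one_le_pow _ _ (by omega)
    have hmul := aux_mul_sub p hp k
    have hn : 2 * p ^ (k + 1) - 1 = p * (2 * p ^ k - 1) + (p - 1) := by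
      have hP2 : p ≤ p ^ (k + 1) := Nat.le_self_pow (by omega) p
      omega
    have hpos : 0 < 2 * p ^ (k + 1) - 1 := by omega
    rw [Nat.digits_def' (by omega : 1 < p) hpos]
    simp only [List.sum_cons]
    have hmod : (2 * p ^ (k + 1) - 1) % p = p - 1 := by
      rw [hn, Nat.mul_add_mod, Nat.mod_eq_of_lt (by omega)]
    have hdiv : (2 * p ^ (k + 1) - 1) / p = 2 * p ^ k - 1 := by
      rw [hn, Nat.mul_add_div (by omega), Nat.div_eq_of_lt (by omega)]
      omega
    rw [hmod, hdiv, ih, Nat.succ_mul]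
    have := k * (p - 1)
    omega

lemma aux_sum_digits_le (p : ℕ) (hp : 2 ≤ p) (k : ℕ) : ∀ n, n ≤ 2 * p ^ k - 2 →
    (Nat.digits p n).sum ≤ k * (p - 1) := by
  induction k with
  | zero =>
    intro n hn
    have : n = 0 := by norm_num at hn; omega
    simp [this]
  | succ k ih =>
    intro n hn
    rcases Nat.eq_zero_or_pos n with h0 | h0
    · simp [h0]
    have hP : 1 ≤ p ^ k := Nat.one_le_pow _ _ (by omega)
    have hP1 : 1 ≤ p ^ (k + 1) := Nat.one_le_pow _ _ (by omega)
    rw [Nat.digits_def' (by omega : 1 < p) h0]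
    simp only [List.sum_cons]
    have hr : n % p < p := Nat.mod_lt _ (by omega)
    have hdm := Nat.div_add_mod n p
    have hsm : (k + 1) * (p - 1) = k * (p - 1) + (p - 1) := by rw [Nat.succ_mul]
    by_cases hq : n / p ≤ 2 * p ^ k - 2
    · have h := ih _ hq
      omega
    · have hq1 : 2 * p ^ k - 1 ≤ n / p := by omega
      have hmul1 : p * (2 * p ^ k - 1) ≤ p * (n / p) := Nat.mul_le_mul_left _ hq1
      have hpk := aux_mul_sub p hp k
      have hle : p * (n / p) ≤ n := Nat.mul_div_le n p
      have heq : n / p = 2 * p ^ k - 1 := by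
        by_contra h
        have h2 : 2 * p ^ k ≤ n / p := by omega
        have hmul2 : p * (2 * p ^ k) ≤ p * (n / p) := Nat.mul_le_mul_left _ h2
        have hpk2 : p * (2 * p ^ k) = 2 * p ^ (k + 1) := by ring
        omega
      have hr2 : n % p ≤ p - 2 := by
        rw [heq] at hdm
        omega
      rw [heq, aux_sum_digits_eq p hp k]
      omega

theorem stmt_17 (p l : ℕ) (hp : p.Prime) (hl : 2 ≤ l) :
    IsLeast {n : ℕ | 0 < n ∧ Nat.log p ((Nat.digits p n).sum) = l}
      (2 * p ^ ((p ^ l - 1) / (p - 1)) - 1) := by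
  have hp2 : 2 ≤ p := hp.two_le
  set x := (p ^ l - 1) / (p - 1) with hx
  have hdvd : (p - 1) ∣ p ^ l - 1 := by
    have := Nat.sub_dvd_pow_sub_pow p 1 l
    simpa using this
  have hxmul : x * (p - 1) = p ^ l - 1 := Nat.div_mul_cancel hdvd
  have hpl : 1 ≤ p ^ l := Nat.one_le_pow _ _ (by omega)
  have hPx : 1 ≤ p ^ x := Nat.one_le_pow _ _ (by omega)
  constructor
  · refine ⟨by omega, ?_⟩
    rw [aux_sum_digits_eq p hp2 x]
    have : x * (p - 1) + 1 = p ^ l := by omega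
    rw [this, Nat.log_pow (by omega : 1 < p)]
  · rintro m ⟨hm, hlog⟩
    by_contra h
    push_neg at h
    have hs0 : (Nat.digits p m).sum ≠ 0 := by
      intro h0
      rw [h0] at hlog
      simp at hlog
      omega
    have hge : p ^ l ≤ (Nat.digits p m).sum := by
      have := Nat.pow_log_le_self p hs0
      rwa [hlog] at this
    have hle : (Nat.digits p m).sum ≤ x * (p - 1) :=
      aux_sum_digits_le p hp2 x m (by omega)
    omega
end
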